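/- If {T_i}_{i∈I} is a (C,C')-controlled K-operator frame with bounds A, B, and Q ∈ End_A*(H) commutes with C, C', and K, then {T_i Q}_{i∈I} is a (C,C')-controlled (Q*K)-operator frame with bounds A and B‖Q‖². -/

import Mathlib

/-!
Commuting `Q` past `C` and `C'` turns the frame sums for `{T_i Q}` at `x` into those for `{T_i}`
at `Q x`, so the lower bound is the frame inequality at `Q x`. For the upper bound one needs
Paschke's inequality `⟨Q x, Q x⟩ ≤ ‖Q‖² ⟨x, x⟩` for adjointable `Q`: for `c = ⟨x, x⟩ + ε` the
vector `x c^(-1/2)` lies in the unit ball, and `ε → 0` at the end.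
-/

open scoped RightActions

/-- The December-2024 Mathlib `CStarModule` (right `Aᵐᵒᵖ`-action), restated verbatim:
current Mathlib's `CStarModule` now uses a left `A`-action. -/
class CStarModuleOld (A : outParam <| Type*) (E : Type*) [NonUnitalSemiring A] [StarRing A]
    [Module ℂ A] [AddCommGroup E] [Module ℂ E] [PartialOrder A] [SMul Aᵐᵒᵖ E] [Norm A] [Norm E]
    extends Inner A E where
  inner_add_right {x} {y} {z} : inner x (y + z) = inner x y + inner x z
  inner_self_nonneg {x} : 0 ≤ inner x x
  inner_self {x} : inner x x = 0 ↔ x = 0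
  inner_op_smul_right {a : A} {x y : E} : inner x (y <• a) = inner x y * a
  inner_smul_right_complex {z : ℂ} {x} {y} : inner x (z • y) = z • inner x y
  star_inner x y : star (inner x y) = inner y x
  norm_eq_sqrt_norm_inner_self x : ‖x‖ = √‖inner x x‖

variable {A : Type*} [CStarAlgebra A] [PartialOrder A] [StarOrderedRing A]
variable {H : Type*} [NormedAddCommGroup H] [NormedSpace ℂ H] [CompleteSpace H]
  [SMul Aᵐᵒᵖ H] [CStarModuleOld A H]

/-- `S` is the adjoint of `T` with respect to the `A`-valued inner product. -/
def IsAdjointOf (T S : H →L[ℂ] H) : Prop :=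
  ∀ x y : H, (inner A (T x) y : A) = inner A x (S y)

/-- `C` belongs to `GL⁺(H)` : invertible (with adjointable inverse), self-adjoint
and positive with respect to the `A`-valued inner product. -/
def MemGLPlus (C : H →L[ℂ] H) : Prop :=
  (∃ Ci : H →L[ℂ] H, Ci.comp C = ContinuousLinearMap.id ℂ H ∧
      C.comp Ci = ContinuousLinearMap.id ℂ H) ∧
  (∀ x y : H, (inner A (C x) y : A) = inner A x (C y)) ∧
  (∀ x : H, (0 : A) ≤ inner A x (C x))

section CStarAlgebra

open CFC Filter Ring Topology

lemma le_smul_of_conjSqrt_ringInverse_le {c q : A} {r : ℝ} (hc : IsStrictlyPositive c)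
    (h : conjSqrt c⁻¹ʳ q ≤ algebraMap ℝ A r) : q ≤ r • c :=
  calc q = conjSqrt c (conjSqrt c⁻¹ʳ q) := (conjSqrt_conjSqrt_ringInverse c q hc).symm
    _ ≤ conjSqrt c (algebraMap ℝ A r) := conjSqrt_le_conjSqrt h
    _ = r • c := by
      rw [Algebra.algebraMap_eq_smul_one, map_smul, conjSqrt_one c hc.nonneg]

lemma le_smul_of_forall_pos_le_smul_add_one {p q : A} {r : ℝ}
    (h : ∀ ε : ℝ, 0 < ε → q ≤ r • (p + ε • 1)) : q ≤ r • p := by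
  have hlim : Tendsto (fun ε : ℝ => r • (p + ε • (1 : A))) (𝓝[>] 0) (𝓝 (r • p)) := by
    have hcont : Continuous fun ε : ℝ => r • (p + ε • (1 : A)) := by fun_prop
    simpa using (hcont.tendsto 0).mono_left nhdsWithin_le_nhds
  exact ge_of_tendsto hlim (eventually_nhdsWithin_of_forall h)

end CStarAlgebra

namespace CStarModuleOld

variable {A : Type*} [CStarAlgebra A] [PartialOrder A]
variable {H : Type*} [NormedAddCommGroup H] [NormedSpace ℂ H]
  [SMul Aᵐᵒᵖ H] [CStarModuleOld A H]

lemma inner_sub_right (x y z : H) : inner A x (y - z) = inner A x y - inner A x z :=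
  (AddMonoidHom.mk' (fun y : H => (inner A x y : A)) fun _ _ => inner_add_right).map_sub y z

lemma ext_inner_right {u v : H} (h : ∀ w : H, (inner A w u : A) = inner A w v) : u = v := by
  have : (inner A (u - v) (u - v) : A) = 0 := by rw [inner_sub_right, h, sub_self]
  exact sub_eq_zero.mp (inner_self.mp this)

lemma inner_op_smul_left (a : A) (x y : H) : inner A (x <• a) y = star a * inner A x y := by
  rw [← star_inner y, inner_op_smul_right, star_mul, star_inner]

lemma inner_op_smul_op_smul (a b : A) (x y : H) :
    inner A (x <• a) (y <• b) = star a * inner A x y * b := by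
  rw [inner_op_smul_right, inner_op_smul_left, mul_assoc]

lemma norm_sq_eq_norm_inner_self (x : H) : ‖x‖ ^ 2 = ‖(inner A x x : A)‖ := by
  rw [norm_eq_sqrt_norm_inner_self (A := A) x, Real.sq_sqrt (norm_nonneg _)]

lemma inner_self_le_algebraMap_norm_sq [StarOrderedRing A] (x : H) :
    inner A x x ≤ algebraMap ℝ A (‖x‖ ^ 2) := by
  rw [norm_sq_eq_norm_inner_self (A := A)]
  exact IsSelfAdjoint.le_algebraMap_norm_self (star_inner x x)

lemma norm_le_one_of_inner_self_le_one [StarOrderedRing A] {x : H} (h : (inner A x x : A) ≤ 1) :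
    ‖x‖ ≤ 1 := by
  have hsq : ‖x‖ ^ 2 ≤ 1 := by
    rw [norm_sq_eq_norm_inner_self (A := A)]
    exact (CStarAlgebra.norm_le_one_iff_of_nonneg _ inner_self_nonneg).mpr h
  exact (sq_le_one_iff₀ (norm_nonneg x)).mp hsq

end CStarModuleOld

namespace IsAdjointOf

open CStarModuleOld CFC Ring

variable {A : Type*} [CStarAlgebra A] [PartialOrder A]
variable {H : Type*} [NormedAddCommGroup H] [NormedSpace ℂ H]
  [SMul Aᵐᵒᵖ H] [CStarModuleOld A H] {Q Qs : H →L[ℂ] H}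

lemma inner_apply_right (hQ : IsAdjointOf (A := A) Q Qs) (w u : H) :
    (inner A w (Q u) : A) = inner A (Qs w) u := by
  rw [← star_inner, hQ, star_inner]

lemma map_op_smul (hQ : IsAdjointOf (A := A) Q Qs) (a : A) (z : H) : Q (z <• a) = Q z <• a :=
  ext_inner_right fun w => by
    rw [hQ.inner_apply_right, inner_op_smul_right, inner_op_smul_right, hQ.inner_apply_right]

/-- Rescaling `x` by `c^(-1/2)` yields a vector of norm at most `1`, to which the operator-norm
bound applies; conjugating back by `c^(1/2)` gives the claim. -/
lemma inner_map_self_le_of_inner_self_le [StarOrderedRing A] (hQ : IsAdjointOf (A := A) Q Qs)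
    {x : H} {c : A} (hc : IsStrictlyPositive c) (hxc : inner A x x ≤ c) :
    inner A (Q x) (Q x) ≤ ‖Q‖ ^ 2 • c := by
  set u := sqrt c⁻¹ʳ
  have hconj (z : H) : (inner A (z <• u) (z <• u) : A) = conjSqrt c⁻¹ʳ (inner A z z) := by
    rw [inner_op_smul_op_smul, (sqrt_nonneg c⁻¹ʳ).isSelfAdjoint.star_eq, conjSqrt_apply]
  have hy : ‖x <• u‖ ≤ 1 := by
    refine norm_le_one_of_inner_self_le_one ?_
    rw [hconj, ← conjSqrt_ringInverse_self c hc]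
    exact conjSqrt_le_conjSqrt hxc
  refine le_smul_of_conjSqrt_ringInverse_le hc ?_
  rw [← hconj, ← hQ.map_op_smul]
  calc (inner A (Q (x <• u)) (Q (x <• u)) : A) ≤ algebraMap ℝ A (‖Q (x <• u)‖ ^ 2) :=
        inner_self_le_algebraMap_norm_sq _
    _ ≤ algebraMap ℝ A (‖Q‖ ^ 2) := by
        gcongr
        simpa using Q.le_opNorm_of_le hy

lemma inner_map_self_le [StarOrderedRing A] (hQ : IsAdjointOf (A := A) Q Qs) (x : H) :
    inner A (Q x) (Q x) ≤ ‖Q‖ ^ 2 • (inner A x x : A) :=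
  le_smul_of_forall_pos_le_smul_add_one fun _ hε =>
    hQ.inner_map_self_le_of_inner_self_le
      (.nonneg_add inner_self_nonneg (.smul hε isStrictlyPositive_one))
      (le_add_of_nonneg_right (smul_nonneg hε.le zero_le_one))

end IsAdjointOf

theorem stmt_4_general {ι : Type*} (C C' Ks Q Qs : H →L[ℂ] H) (T : ι → H →L[ℂ] H)
    (hQ : IsAdjointOf (A := A) Q Qs)
    (hQC : Q.comp C = C.comp Q) (hQC' : Q.comp C' = C'.comp Q)
    (a b : ℝ) (hb : 0 < b)
    (hframe : ∀ x : H,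
      a • (inner A (Ks x) (Ks x) : A) ≤ ∑' i, (inner A (T i (C x)) (T i (C' x)) : A) ∧
      ∑' i, (inner A (T i (C x)) (T i (C' x)) : A) ≤ b • inner A x x) :
    ∀ x : H,
      a • (inner A (Ks (Q x)) (Ks (Q x)) : A) ≤
        ∑' i, (inner A (T i (Q (C x))) (T i (Q (C' x))) : A) ∧
      ∑' i, (inner A (T i (Q (C x))) (T i (Q (C' x))) : A) ≤
        (b * ‖Q‖ ^ 2) • inner A x x := by
  intro x
  have hCx : Q (C x) = C (Q x) := congr($hQC x)
  have hC'x : Q (C' x) = C' (Q x) := congr($hQC' x)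
  obtain ⟨hlower, hupper⟩ := hframe (Q x)
  rw [hCx, hC'x, mul_smul]
  exact ⟨hlower, hupper.trans (smul_le_smul_of_nonneg_left (hQ.inner_map_self_le x) hb.le)⟩

/-- if `{T_i}` is a `(C,C')`-controlled `K`-operator frame with bounds
`A, B` and `Q` commutes with `C`, `C'` and `K`, then `{T_i Q}` is a `(C,C')`-controlled
`Q*K`-operator frame with bounds `A` and `B‖Q‖²`. Note `(Q*K)* = K*Q`. -/
theorem stmt_4 {ι : Type*} (C C' K Ks Q Qs : H →L[ℂ] H) (T : ι → H →L[ℂ] H)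
    (hC : MemGLPlus (A := A) C) (hC' : MemGLPlus (A := A) C')
    (hK : IsAdjointOf (A := A) K Ks) (hQ : IsAdjointOf (A := A) Q Qs)
    (hQC : Q.comp C = C.comp Q) (hQC' : Q.comp C' = C'.comp Q)
    (hQK : Q.comp K = K.comp Q)
    (a b : ℝ) (ha : 0 < a) (hb : 0 < b)
    (hframe : ∀ x : H,
      a • (inner A (Ks x) (Ks x) : A) ≤ ∑' i, (inner A (T i (C x)) (T i (C' x)) : A) ∧
      ∑' i, (inner A (T i (C x)) (T i (C' x)) : A) ≤ b • inner A x x) :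
    ∀ x : H,
      a • (inner A (Ks (Q x)) (Ks (Q x)) : A) ≤
        ∑' i, (inner A (T i (Q (C x))) (T i (Q (C' x))) : A) ∧
      ∑' i, (inner A (T i (Q (C x))) (T i (Q (C' x))) : A) ≤
        (b * ‖Q‖ ^ 2) • inner A x x :=
  stmt_4_general C C' Ks Q Qs T hQ hQC hQC' a b hb hframe
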